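/- Let G be a finite group, g ∈ G, u a unit of ℤ⟨g⟩, h ∈ G, and 𝒩 : ⟨g⟩ = N₀ ⊴ ... ⊴ N_m = G a subnormal series. Let 𝒩^h be the conjugate series ⟨g^h⟩ = N₀^h ⊴ ... ⊴ N_m^h = G. Then c_{𝒩^h}(u^h) = c_𝒩(u). -/

import Mathlib

/-- Conjugation `a^h = h⁻¹ a h` of group-ring elements by group elements. -/
noncomputable def conjBy {G : Type*} [Group G] (h : G) (a : MonoidAlgebra ℤ G) :
    MonoidAlgebra ℤ G :=
  MonoidAlgebra.of ℤ G h⁻¹ * a * MonoidAlgebra.of ℤ G h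

/-- A subnormal series `⟨g⟩ = N₀ ⊴ N₁ ⊴ ⋯ ⊴ N_len = G`. -/
structure SubnormalSeries (G : Type*) [Group G] (g : G) where
  len : ℕ
  N : ℕ → Subgroup G
  bot_eq : N 0 = Subgroup.zpowers g
  top_eq : N len = ⊤
  le_succ : ∀ i, N i ≤ N (i + 1)
  conj_mem : ∀ i, ∀ x ∈ N (i + 1), ∀ y ∈ N i, x⁻¹ * y * x ∈ N i

/-- A choice, for each `i`, of a (right) transversal `T i` of `N i` in `N (i+1)`,
recorded as a duplicate-free list. -/
structure TransversalSystem {G : Type*} [Group G] {g : G}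
    (S : SubnormalSeries G g) where
  T : ℕ → List G
  nodup : ∀ i, (T i).Nodup
  mem : ∀ i, ∀ t ∈ T i, t ∈ S.N (i + 1)
  rep : ∀ i, ∀ y ∈ S.N (i + 1), ∃! t, t ∈ T i ∧ y * t⁻¹ ∈ S.N i

/-- The construction `c⁰(u) = u`, `cⁱ(u) = ∏_{h ∈ T i} (cⁱ⁻¹(u))^h`. -/
noncomputable def cSeq {G : Type*} [Group G] {g : G} (S : SubnormalSeries G g)
    (TS : TransversalSystem S) (u : MonoidAlgebra ℤ G) : ℕ → MonoidAlgebra ℤ G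
  | 0 => u
  | i + 1 => ((TS.T i).map fun h => conjBy h (cSeq S TS u i)).prod

/-!
Along the series, `cⁱ(u)` is a central element of `ℤNᵢ`. Indeed, if `c` is central in `ℤNᵢ₋₁`,
its conjugates by elements of `Nᵢ` lie in `ℤNᵢ₋₁` and hence pairwise commute; conjugating
`∏_{t ∈ Tᵢ} cᵗ` by `x ∈ Nᵢ` replaces each `t` by `tx`, which agrees with a representative
`σ t ∈ Tᵢ` modulo `Nᵢ₋₁`, and `σ` permutes `Tᵢ`, so only the order of the commuting factors changes.
Conjugating the transversals by `h` conjugates every `cⁱ` by `h`, so `c_{𝒩^h}(u^h) = c_𝒩(u)^h`,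
which is `c_𝒩(u)` because `c_𝒩(u)` is central in `ℤG`.
-/
namespace MonoidAlgebra

variable {k G : Type*}

theorem commute_of_forall_mem_support [CommSemiring k] [Monoid G] {a b : k[G]}
    (h : ∀ y ∈ b.coeff.support, Commute a (of k G y)) : Commute a b := by
  have hspan : Submodule.span k (of k G '' b.coeff.support) ≤
      (Subalgebra.centralizer k {a}).toSubmodule := by
    rw [Submodule.span_le]
    rintro _ ⟨y, hy, rfl⟩
    simpa [Set.mem_centralizer_iff] using (h y hy).eq
  have hb := hspan (mem_span_support_coeff b)
  simp only [Subalgebra.mem_toSubmodule, Subalgebra.mem_centralizer_iff,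
    Set.mem_singleton_iff, forall_eq] at hb
  exact hb

def supportedSubmonoid [Semiring k] [Monoid G] (H : Submonoid G) : Submonoid k[G] where
  carrier := {a | (a.coeff.support : Set G) ⊆ H}
  one_mem' := by
    intro y hy
    rw [Finset.mem_one.mp (support_coeff_one_subset hy)]
    exact H.one_mem
  mul_mem' := by
    classical
    intro a b ha hb y hy
    obtain ⟨p, hp, q, hq, rfl⟩ := Finset.mem_mul.mp (support_coeff_mul_subset a b hy)
    exact H.mul_mem (ha hp) (hb hq)

theorem of_inv_mul_of [Semiring k] [Group G] (x : G) : of k G x⁻¹ * of k G x = 1 := by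
  rw [← map_mul, inv_mul_cancel, map_one]

theorem of_mul_of_inv [Semiring k] [Group G] (x : G) : of k G x * of k G x⁻¹ = 1 := by
  rw [← map_mul, mul_inv_cancel, map_one]

end MonoidAlgebra

open MonoidAlgebra

section ConjBy

variable {G : Type*} [Group G]

theorem conjBy_one (h : G) : conjBy h (1 : MonoidAlgebra ℤ G) = 1 := by
  rw [conjBy, mul_one, of_inv_mul_of]

theorem conjBy_mul (h : G) (a b : MonoidAlgebra ℤ G) :
    conjBy h (a * b) = conjBy h a * conjBy h b := by
  simp only [conjBy, mul_assoc]
  rw [← mul_assoc (of ℤ G h), of_mul_of_inv, one_mul]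

theorem conjBy_list_prod (h : G) (l : List (MonoidAlgebra ℤ G)) :
    conjBy h l.prod = (l.map (conjBy h)).prod := by
  induction l with
  | nil => exact conjBy_one h
  | cons a l ih => rw [List.prod_cons, conjBy_mul, ih, List.map_cons, List.prod_cons]

theorem conjBy_conjBy (t h : G) (a : MonoidAlgebra ℤ G) :
    conjBy h (conjBy t a) = conjBy (t * h) a := by
  simp only [conjBy, mul_inv_rev, map_mul, mul_assoc]

theorem conjBy_eq_self_iff {x : G} {a : MonoidAlgebra ℤ G} :
    conjBy x a = a ↔ Commute (of ℤ G x) a := by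
  constructor
  · intro h
    calc of ℤ G x * a = of ℤ G x * conjBy x a := by rw [h]
      _ = a * of ℤ G x := by rw [conjBy, ← mul_assoc, ← mul_assoc, of_mul_of_inv, one_mul]
  · intro h
    rw [conjBy, mul_assoc, ← h.eq, ← mul_assoc, of_inv_mul_of, one_mul]

theorem conjBy_mem_supportedSubmonoid {H : Subgroup G} {x : G}
    (hx : ∀ y ∈ H, x⁻¹ * y * x ∈ H) {a : MonoidAlgebra ℤ G}
    (ha : a ∈ supportedSubmonoid H.toSubmonoid) :
    conjBy x a ∈ supportedSubmonoid H.toSubmonoid := by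
  classical
  intro y hy
  rw [conjBy, MonoidAlgebra.of_apply, MonoidAlgebra.of_apply] at hy
  obtain ⟨z, hz, rfl⟩ := Finset.mem_image.mp (support_coeff_mul_single_subset _ _ _ hy)
  obtain ⟨w, hw, rfl⟩ := Finset.mem_image.mp (support_coeff_single_mul_subset _ _ _ hz)
  exact hx w (ha hw)

end ConjBy

section Transversal

variable {G : Type*} [Group G] {H K : Subgroup G} {T : List G}

/-- Right multiplication by `x ∈ K` permutes the right cosets of `H` in `K`. -/
theorem exists_perm_map_mul_inv_mem (hnodup : T.Nodup) (hmem : ∀ t ∈ T, t ∈ K)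
    (hrep : ∀ y ∈ K, ∃! t, t ∈ T ∧ y * t⁻¹ ∈ H) {x : G} (hx : x ∈ K) :
    ∃ σ : G → G, (T.map σ).Perm T ∧ ∀ t ∈ T, t * x * (σ t)⁻¹ ∈ H := by
  choose! σ hσT hσH using fun t (ht : t ∈ T) => (hrep (t * x) (mul_mem (hmem t ht) hx)).exists
  refine ⟨σ, ?_, hσH⟩
  have hinj : ∀ t ∈ T, ∀ t' ∈ T, σ t = σ t' → t = t' := by
    intro t ht t' ht' hσ
    have hquot : t * t'⁻¹ ∈ H := by
      have := mul_mem (hσH t ht) (inv_mem (hσH t' ht'))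
      rwa [hσ, mul_inv_rev, inv_inv, mul_assoc (t * x), inv_mul_cancel_left, mul_inv_rev,
        mul_assoc, mul_inv_cancel_left] at this
    exact (hrep t (hmem t ht)).unique ⟨ht, by simp⟩ ⟨ht', hquot⟩
  refine ((hnodup.map_on hinj).subperm fun y hy => ?_).perm_of_length_le (by simp)
  obtain ⟨t, ht, rfl⟩ := List.mem_map.mp hy
  exact hσT t ht

end Transversal

section Central

variable {G : Type*} [Group G] {H K : Subgroup G} {c : MonoidAlgebra ℤ G}

/-- `c` is a central element of the subring `ℤH` of `ℤG`. -/
def IsCentralIn (H : Subgroup G) (c : MonoidAlgebra ℤ G) : Prop :=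
  c ∈ supportedSubmonoid H.toSubmonoid ∧ ∀ n ∈ H, conjBy n c = c

theorem isCentralIn_zpowers {g : G} {u : MonoidAlgebra ℤ G}
    (hu : (u.coeff.support : Set G) ⊆ Subgroup.zpowers g) : IsCentralIn (Subgroup.zpowers g) u := by
  refine ⟨hu, fun x hx => conjBy_eq_self_iff.mpr (commute_of_forall_mem_support fun y hy => ?_)⟩
  obtain ⟨m, rfl⟩ := hx
  obtain ⟨k, rfl⟩ := hu hy
  exact (Commute.zpow_zpow_self g m k).map (of ℤ G)

theorem IsCentralIn.conjBy_eq_of_mul_inv_mem (hc : IsCentralIn H c) {x y : G}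
    (hxy : x * y⁻¹ ∈ H) : conjBy x c = conjBy y c := by
  rw [← inv_mul_cancel_right x y, ← conjBy_conjBy, hc.2 _ hxy]

theorem IsCentralIn.commute (hc : IsCentralIn H c) {b : MonoidAlgebra ℤ G}
    (hb : b ∈ supportedSubmonoid H.toSubmonoid) : Commute c b :=
  commute_of_forall_mem_support fun y hy => (conjBy_eq_self_iff.mp (hc.2 y (hb hy))).symm

theorem IsCentralIn.commute_conjBy_conjBy (hc : IsCentralIn H c)
    (hK : ∀ x ∈ K, ∀ y ∈ H, x⁻¹ * y * x ∈ H) {s s' : G} (hs : s ∈ K) (hs' : s' ∈ K) :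
    Commute (conjBy s c) (conjBy s' c) := by
  have hcomm : Commute c (conjBy (s' * s⁻¹) c) :=
    hc.commute (conjBy_mem_supportedSubmonoid (hK _ (mul_mem hs' (inv_mem hs))) hc.1)
  have h := congrArg (conjBy s) hcomm.eq
  simp only [conjBy_mul, conjBy_conjBy, inv_mul_cancel_right] at h
  exact h

theorem IsCentralIn.list_prod_map_conjBy (hc : IsCentralIn H c) (hHK : H ≤ K)
    (hK : ∀ x ∈ K, ∀ y ∈ H, x⁻¹ * y * x ∈ H) {T : List G} (hnodup : T.Nodup)
    (hmem : ∀ t ∈ T, t ∈ K) (hrep : ∀ y ∈ K, ∃! t, t ∈ T ∧ y * t⁻¹ ∈ H) :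
    IsCentralIn K (T.map fun t => conjBy t c).prod := by
  have hsupp : (T.map fun t => conjBy t c).prod ∈ supportedSubmonoid H.toSubmonoid := by
    refine Submonoid.list_prod_mem _ fun a ha => ?_
    obtain ⟨t, ht, rfl⟩ := List.mem_map.mp ha
    exact conjBy_mem_supportedSubmonoid (hK t (hmem t ht)) hc.1
  refine ⟨fun y hy => hHK (hsupp hy), fun x hx => ?_⟩
  obtain ⟨σ, hσ, hσH⟩ := exists_perm_map_mul_inv_mem hnodup hmem hrep hx
  have hpairwise : (T.map fun t => conjBy t c).Pairwise Commute :=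
    List.pairwise_map.mpr <| List.pairwise_of_forall_mem_list fun a ha b hb =>
      hc.commute_conjBy_conjBy hK (hmem a ha) (hmem b hb)
  calc conjBy x (T.map fun t => conjBy t c).prod
      = (T.map fun t => conjBy (t * x) c).prod := by
        simp only [conjBy_list_prod, List.map_map, Function.comp_def, conjBy_conjBy]
    _ = ((T.map σ).map fun t => conjBy t c).prod := by
        rw [List.map_map]
        exact congrArg List.prod
          (List.map_congr_left fun t ht => hc.conjBy_eq_of_mul_inv_mem (hσH t ht))
    _ = (T.map fun t => conjBy t c).prod := ((hσ.map _).symm.prod_eq' hpairwise).symm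

end Central

section Series

variable {G : Type*} [Group G] {g : G} (S : SubnormalSeries G g) (TS : TransversalSystem S)

theorem cSeq_isCentralIn {u : MonoidAlgebra ℤ G}
    (hu : (u.coeff.support : Set G) ⊆ Subgroup.zpowers g) :
    ∀ i, IsCentralIn (S.N i) (cSeq S TS u i)
  | 0 => S.bot_eq ▸ isCentralIn_zpowers hu
  | i + 1 => (cSeq_isCentralIn hu i).list_prod_map_conjBy (S.le_succ i) (S.conj_mem i)
      (TS.nodup i) (TS.mem i) (TS.rep i)

theorem cSeq_conjBy {g' : G} {S' : SubnormalSeries G g'} {TS' : TransversalSystem S'} {h : G}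
    (hT : ∀ i, TS'.T i = (TS.T i).map fun t => h⁻¹ * t * h) (u : MonoidAlgebra ℤ G) :
    ∀ i, cSeq S' TS' (conjBy h u) i = conjBy h (cSeq S TS u i)
  | 0 => rfl
  | i + 1 => by
    simp only [cSeq, cSeq_conjBy hT u i, hT i, List.map_map, conjBy_list_prod, Function.comp_def,
      conjBy_conjBy, mul_assoc, mul_inv_cancel_left]

end Series

theorem cSeq_conj_general {G : Type*} [Group G] (g h : G)
    (S : SubnormalSeries G g) (TS : TransversalSystem S)
    (S' : SubnormalSeries G (h⁻¹ * g * h)) (TS' : TransversalSystem S')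
    (hlen : S'.len = S.len)
    (hT : ∀ i, TS'.T i = (TS.T i).map fun t => h⁻¹ * t * h)
    (u : MonoidAlgebra ℤ G)
    (hsupp : (u.coeff.support : Set G) ⊆ (Subgroup.zpowers g : Subgroup G)) :
    cSeq S' TS' (conjBy h u) S'.len = cSeq S TS u S.len := by
  have hcentral := cSeq_isCentralIn S TS hsupp S.len
  rw [hlen, cSeq_conjBy S TS hT u, hcentral.2 h (S.top_eq ▸ Subgroup.mem_top h)]

theorem cSeq_conj {G : Type*} [Group G] [Fintype G] (g h : G)
    (S : SubnormalSeries G g) (TS : TransversalSystem S)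
    (S' : SubnormalSeries G (h⁻¹ * g * h)) (TS' : TransversalSystem S')
    (hlen : S'.len = S.len)
    (hN : ∀ i, S'.N i = (S.N i).map (MulAut.conj h⁻¹).toMonoidHom)
    (hT : ∀ i, TS'.T i = (TS.T i).map fun t => h⁻¹ * t * h)
    (u : MonoidAlgebra ℤ G) (hu : IsUnit u)
    (hsupp : (u.coeff.support : Set G) ⊆ (Subgroup.zpowers g : Subgroup G)) :
    cSeq S' TS' (conjBy h u) S'.len = cSeq S TS u S.len :=
  cSeq_conj_general g h S TS S' TS' hlen hT u hsupp
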